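/- arXiv:math/0004092 — 2 statements merged into one kernel-verified Lean document; each statement's English description precedes it below -/
import Mathlib

section
/- In A(SL_q(2)) with q a nonzero complex number such that q^{2s} ≠ 1 for 1 ≤ s ≤ k, one has a^k d^k = Σ_{j=0}^{k} p_{k,j}(q) b^j c^j, where p_{k,j}(q) = q^{j^2} · (∏_{r=j+1}^{k}(q^{2r}-1)) / (∏_{s=1}^{k-j}(q^{2s}-1)). -/
noncomputable section
open scoped TensorProduct

/-- The free `ℂ`-algebra on four generators `a, b, c, d`. -/
abbrev FreeSL : Type := FreeAlgebra ℂ (Fin 4)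

def Fa : FreeSL := FreeAlgebra.ι ℂ 0
def Fb : FreeSL := FreeAlgebra.ι ℂ 1
def Fc : FreeSL := FreeAlgebra.ι ℂ 2
def Fd : FreeSL := FreeAlgebra.ι ℂ 3

/-- The defining relations of `A(SL_q(2))`. -/
inductive SLqRel (q : ℂ) : FreeSL → FreeSL → Prop
  | ab : SLqRel q (Fa * Fb) (q • (Fb * Fa))
  | ac : SLqRel q (Fa * Fc) (q • (Fc * Fa))
  | bd : SLqRel q (Fb * Fd) (q • (Fd * Fb))
  | bc : SLqRel q (Fb * Fc) (Fc * Fb)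
  | cd : SLqRel q (Fc * Fd) (q • (Fd * Fc))
  | ad : SLqRel q (Fa * Fd - Fd * Fa) ((q - q⁻¹) • (Fb * Fc))
  | det : SLqRel q (Fa * Fd - q • (Fb * Fc)) 1

/-- The quantum coordinate algebra `A(SL_q(2))`. -/
abbrev ASLq (q : ℂ) : Type := RingQuot (SLqRel q)

def aq (q : ℂ) : ASLq q := RingQuot.mkAlgHom ℂ (SLqRel q) Fa
def bq (q : ℂ) : ASLq q := RingQuot.mkAlgHom ℂ (SLqRel q) Fb
def cq (q : ℂ) : ASLq q := RingQuot.mkAlgHom ℂ (SLqRel q) Fc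
def dq (q : ℂ) : ASLq q := RingQuot.mkAlgHom ℂ (SLqRel q) Fd

/-- The coefficients `p_{k,j}(q)`. -/
def pcoef (q : ℂ) (k j : ℕ) : ℂ :=
  q ^ (j ^ 2) * (∏ r ∈ Finset.Icc (j + 1) k, (q ^ (2 * r) - 1)) /
    (∏ s ∈ Finset.Icc 1 (k - j), (q ^ (2 * s) - 1))

/-!
Write `X_k = a^k d^k`. Since `a^k (a d) d^k = a^k (1 + q b c) d^k` and moving `b` to the left
past `a^k` and `c` to the right past `d^k` costs `q^k` each, `X_{k+1} = X_k + q^(2k+1) b X_k c`.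
Substituting the expansion of `X_k` and using `b (b^j c^j) c = b^(j+1) c^(j+1)`, the claim
reduces to the `q`-Pascal recursion `p_{k+1,j+1} = p_{k,j+1} + q^(2k+1) p_{k,j}`, which holds
because `p_{k,j} = q^(j^2) [k choose j]_{q^2}` is a Gaussian binomial coefficient up to the
factor `q^(j^2)`.
-/

open Finset

section Commutation

variable {S R : Type*} [CommSemiring S] [Semiring R] [Algebra S R] {q : S}

theorem pow_mul_eq_smul_mul_pow {a b : R} (h : a * b = q • (b * a)) (k : ℕ) :
    a ^ k * b = q ^ k • (b * a ^ k) := by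
  induction k with
  | zero => simp
  | succ k ih =>
    rw [pow_succ, mul_assoc, h, mul_smul_comm, ← mul_assoc, ih, smul_mul_assoc, smul_smul,
      mul_assoc, ← pow_succ, ← pow_succ']

theorem mul_pow_eq_smul_pow_mul {c d : R} (h : c * d = q • (d * c)) (k : ℕ) :
    c * d ^ k = q ^ k • (d ^ k * c) := by
  induction k with
  | zero => simp
  | succ k ih =>
    rw [pow_succ', ← mul_assoc, h, smul_mul_assoc, mul_assoc, ih, mul_smul_comm, smul_smul,
      ← mul_assoc, ← pow_succ', ← pow_succ']

theorem pow_succ_mul_pow_succ {a b c d : R} (hab : a * b = q • (b * a))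
    (hcd : c * d = q • (d * c)) (had : a * d = 1 + q • (b * c)) (k : ℕ) :
    a ^ (k + 1) * d ^ (k + 1) = a ^ k * d ^ k + q ^ (2 * k + 1) • (b * (a ^ k * d ^ k) * c) := by
  have hbc : a ^ k * (b * c) * d ^ k = q ^ (2 * k) • (b * (a ^ k * d ^ k) * c) := by
    calc a ^ k * (b * c) * d ^ k = (a ^ k * b) * (c * d ^ k) := by simp only [mul_assoc]
      _ = (q ^ k * q ^ k) • (b * a ^ k * (d ^ k * c)) := by
        rw [pow_mul_eq_smul_mul_pow hab, mul_pow_eq_smul_pow_mul hcd, smul_mul_smul_comm]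
      _ = q ^ (2 * k) • (b * (a ^ k * d ^ k) * c) := by
        rw [← pow_add, ← two_mul]; simp only [mul_assoc]
  calc a ^ (k + 1) * d ^ (k + 1) = a ^ k * (a * d) * d ^ k := by
        rw [pow_succ, pow_succ']; simp only [mul_assoc]
    _ = a ^ k * d ^ k + q ^ (2 * k + 1) • (b * (a ^ k * d ^ k) * c) := by
        rw [had, mul_add, mul_one, add_mul, mul_smul_comm, smul_mul_assoc, hbc, smul_smul,
          ← pow_succ']

end Commutation

theorem sum_range_add_two_smul_of_pascal {S M : Type*} [Semiring S] [AddCommMonoid M] [Module S M]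
    (f g : ℕ → S) (r : S) (x : ℕ → M) {k : ℕ} (h_zero : g 0 = f 0)
    (h_succ : ∀ j < k, g (j + 1) = f (j + 1) + r * f j) (h_top : g (k + 1) = r * f k) :
    ∑ j ∈ range (k + 2), g j • x j =
      ∑ j ∈ range (k + 1), f j • x j + r • ∑ j ∈ range (k + 1), f j • x (j + 1) := by
  have h_mid : ∑ j ∈ range k, g (j + 1) • x (j + 1) =
      ∑ j ∈ range k, f (j + 1) • x (j + 1) + r • ∑ j ∈ range k, f j • x (j + 1) := by
    rw [smul_sum, ← sum_add_distrib]
    refine sum_congr rfl fun j hj => ?_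
    rw [h_succ j (mem_range.mp hj), add_smul, mul_smul]
  rw [sum_range_succ', sum_range_succ, h_mid, h_top, h_zero, sum_range_succ' _ k,
    sum_range_succ _ k, smul_add, mul_smul]
  abel

section Coefficients

variable {q : ℂ}

theorem prod_Icc_pow_two_mul_sub_one_ne_zero {n : ℕ}
    (h : ∀ s : ℕ, 1 ≤ s → s ≤ n → q ^ (2 * s) ≠ 1) :
    ∏ s ∈ Icc 1 n, (q ^ (2 * s) - 1) ≠ 0 :=
  prod_ne_zero_iff.mpr fun s hs => sub_ne_zero.mpr (h s (mem_Icc.mp hs).1 (mem_Icc.mp hs).2)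

theorem pcoef_zero {k : ℕ} (hroot : ∀ s : ℕ, 1 ≤ s → s ≤ k → q ^ (2 * s) ≠ 1) :
    pcoef q k 0 = 1 := by
  simp [pcoef, prod_Icc_pow_two_mul_sub_one_ne_zero hroot]

theorem pcoef_succ_self (k : ℕ) : pcoef q (k + 1) (k + 1) = q ^ (2 * k + 1) * pcoef q k k := by
  simp only [pcoef, Nat.sub_self, Icc_eq_empty_of_lt (Nat.lt_succ_self _),
    prod_empty, mul_one, div_one, ← pow_add]
  ring_nf

theorem pcoef_succ_succ {k j : ℕ} (hjk : j < k)
    (hroot : ∀ s : ℕ, 1 ≤ s → s ≤ k → q ^ (2 * s) ≠ 1) :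
    pcoef q (k + 1) (j + 1) = pcoef q k (j + 1) + q ^ (2 * k + 1) * pcoef q k j := by
  obtain ⟨t, rfl⟩ : ∃ t, k = j + t + 1 := ⟨k - j - 1, by omega⟩
  have hD : ∏ s ∈ Icc 1 t, (q ^ (2 * s) - 1) ≠ 0 :=
    prod_Icc_pow_two_mul_sub_one_ne_zero fun s h1 h2 => hroot s h1 (by omega)
  have hf : q ^ (2 * (t + 1)) - 1 ≠ 0 := sub_ne_zero.mpr (hroot (t + 1) (by omega) (by omega))
  simp only [pcoef, show j + t + 1 + 1 - (j + 1) = t + 1 by omega,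
    show j + t + 1 - (j + 1) = t by omega, show j + t + 1 - j = t + 1 by omega]
  rw [prod_Icc_succ_top (show j + 1 + 1 ≤ j + t + 1 + 1 by omega),
    ← mul_prod_Ioc_eq_prod_Icc (show j + 1 ≤ j + t + 1 by omega), ← Icc_add_one_left_eq_Ioc,
    prod_Icc_succ_top (show 1 ≤ t + 1 by omega)]
  field_simp
  ring

end Coefficients

theorem pow_mul_pow_eq_sum_pcoef {R : Type*} [Semiring R] [Algebra ℂ R] {q : ℂ} {a b c d : R}
    (hab : a * b = q • (b * a)) (hcd : c * d = q • (d * c)) (had : a * d = 1 + q • (b * c))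
    (k : ℕ) (hroot : ∀ s : ℕ, 1 ≤ s → s ≤ k → q ^ (2 * s) ≠ 1) :
    a ^ k * d ^ k = ∑ j ∈ range (k + 1), pcoef q k j • (b ^ j * c ^ j) := by
  induction k with
  | zero => simp [pcoef]
  | succ k ih =>
    have hroot' : ∀ s : ℕ, 1 ≤ s → s ≤ k → q ^ (2 * s) ≠ 1 := fun s h1 h2 =>
      hroot s h1 (h2.trans k.le_succ)
    have hshift : ∀ j, b * (b ^ j * c ^ j) * c = b ^ (j + 1) * c ^ (j + 1) := fun j => by
      rw [pow_succ', pow_succ]; simp only [mul_assoc]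
    rw [pow_succ_mul_pow_succ hab hcd had, ih hroot', mul_sum, sum_mul]
    simp only [mul_smul_comm, smul_mul_assoc, hshift]
    exact (sum_range_add_two_smul_of_pascal (pcoef q k) (pcoef q (k + 1)) _
      (fun j => b ^ j * c ^ j) (by rw [pcoef_zero hroot, pcoef_zero hroot'])
      (fun j hj => pcoef_succ_succ hj hroot') (pcoef_succ_self k)).symm

theorem aq_mul_bq (q : ℂ) : aq q * bq q = q • (bq q * aq q) := by
  simpa [aq, bq] using RingQuot.mkAlgHom_rel ℂ (SLqRel.ab (q := q))

theorem cq_mul_dq (q : ℂ) : cq q * dq q = q • (dq q * cq q) := by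
  simpa [cq, dq] using RingQuot.mkAlgHom_rel ℂ (SLqRel.cd (q := q))

theorem aq_mul_dq (q : ℂ) : aq q * dq q = 1 + q • (bq q * cq q) := by
  simpa [aq, bq, cq, dq, sub_eq_iff_eq_add] using RingQuot.mkAlgHom_rel ℂ (SLqRel.det (q := q))

theorem stmt1_general (q : ℂ) (k : ℕ)
    (hroot : ∀ s : ℕ, 1 ≤ s → s ≤ k → q ^ (2 * s) ≠ 1) :
    aq q ^ k * dq q ^ k =
      ∑ j ∈ Finset.range (k + 1), pcoef q k j • (bq q ^ j * cq q ^ j) :=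
  pow_mul_pow_eq_sum_pcoef (aq_mul_bq q) (cq_mul_dq q) (aq_mul_dq q) k hroot

/-- `a^k d^k = Σ_{j=0}^{k} p_{k,j}(q) b^j c^j` when `q^(2s) ≠ 1` for `1 ≤ s ≤ k`. -/
theorem stmt1 (q : ℂ) (hq : q ≠ 0) (k : ℕ)
    (hroot : ∀ s : ℕ, 1 ≤ s → s ≤ k → q ^ (2 * s) ≠ 1) :
    aq q ^ k * dq q ^ k =
      ∑ j ∈ Finset.range (k + 1), pcoef q k j • (bq q ^ j * cq q ^ j) :=
  stmt1_general q k hroot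
end
end

section
/- Let q be a primitive l-th root of unity with l odd, and let A(SL(2)) ⊂ A(SL_q(2)) be the central subalgebra generated by α=a^l, β=b^l, γ=c^l, δ=d^l. Then A(SL_q(2)) is generated as a left A(SL(2))-module by the 2l^3 elements a^{r_a} b^{r_b} c^{r_c} and b^{r_b} c^{r_c} d^{r_d} with 0 ≤ r_a, r_b, r_c, r_d ≤ l-1. -/
noncomputable section
open scoped TensorProduct

/-! For `q ≠ 0` the monomials `a^i b^j c^k` and `b^j c^k d^m`, with arbitrary exponents, already
span `A(SL_q(2))` over `ℂ`: their span contains `1` and is stable under right multiplication by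
each generator, because the relations `a d = 1 + q b c` and `d a = 1 + q⁻¹ b c` turn the only
non-monomial products into combinations of monomials. When `q ^ l = 1` the `q`-commutation
relations make `b^l` and `c^l` commute with `a`, `c^l` and `d^l` with `b`, and `d^l` with `c`, so in
each monomial the `l`-th powers can be pulled out to the left and every exponent reduced mod `l`. -/

section QCommute

variable {K A : Type*} [CommSemiring K] [Semiring A] [Algebra K A] {x y : A} {t : K}

theorem mul_pow_of_mul_eq_smul (h : x * y = t • (y * x)) (n : ℕ) :
    x * y ^ n = t ^ n • (y ^ n * x) := by
  induction n with
  | zero => simp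
  | succ n ih =>
    rw [pow_succ, ← mul_assoc, ih, smul_mul_assoc, mul_assoc, h, mul_smul_comm, smul_smul,
      ← mul_assoc, ← pow_succ, ← pow_succ]

theorem pow_mul_of_mul_eq_smul (h : x * y = t • (y * x)) (n : ℕ) :
    x ^ n * y = t ^ n • (y * x ^ n) := by
  induction n with
  | zero => simp
  | succ n ih =>
    rw [pow_succ, mul_assoc, h, mul_smul_comm, ← mul_assoc, ih, smul_mul_assoc, smul_smul,
      mul_assoc, ← pow_succ, ← pow_succ']

theorem mul_pow_mul_of_mul_eq_smul (h : x * y = t • (y * x)) (n : ℕ) (z : A) :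
    x * (y ^ n * z) = t ^ n • (y ^ n * (x * z)) := by
  rw [← mul_assoc, mul_pow_of_mul_eq_smul h, smul_mul_assoc, mul_assoc]

theorem pow_mul_mul_of_mul_eq_smul (h : x * y = t • (y * x)) (n : ℕ) (z : A) :
    x ^ n * (y * z) = t ^ n • (y * (x ^ n * z)) := by
  rw [← mul_assoc, pow_mul_of_mul_eq_smul h, smul_mul_assoc, mul_assoc]

theorem commute_pow_of_mul_eq_smul (h : x * y = t • (y * x)) {l : ℕ} (hl : t ^ l = 1) :
    Commute x (y ^ l) := by
  rw [Commute, SemiconjBy, mul_pow_of_mul_eq_smul h, hl, one_smul]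

end QCommute

theorem Submodule.span_eq_top_of_mul_mem {K A : Type*} [CommSemiring K] [Semiring A]
    [Algebra K A] {S G : Set A} (hS : Algebra.adjoin K S = ⊤) (h1 : 1 ∈ Submodule.span K G)
    (hmul : ∀ s ∈ S, ∀ g ∈ G, g * s ∈ Submodule.span K G) : Submodule.span K G = ⊤ := by
  set N := Submodule.span K G
  have hmulN : ∀ s ∈ S, ∀ m ∈ N, m * s ∈ N := fun s hs =>
    Submodule.span_le (p := N.comap (LinearMap.mulRight K s)).mpr (hmul s hs)
  refine eq_top_iff'.mpr fun x => ?_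
  suffices ∀ m ∈ N, m * x ∈ N by simpa using this 1 h1
  have hx : x ∈ Algebra.adjoin K S := hS ▸ Algebra.mem_top
  induction hx using Algebra.adjoin_induction with
  | mem s hs => exact hmulN s hs
  | algebraMap r =>
    intro m hm
    simpa [← Algebra.commutes, ← Algebra.smul_def] using N.smul_mem r hm
  | add x y _ _ hx hy => intro m hm; rw [mul_add]; exact add_mem (hx m hm) (hy m hm)
  | mul x y _ _ hx hy => intro m hm; rw [← mul_assoc]; exact hy _ (hx m hm)

theorem pow_mul_pow_mul_pow_eq_div_mul_mod {M : Type*} [Monoid M] {x y z : M} {l : ℕ}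
    (hxy : Commute x (y ^ l)) (hxz : Commute x (z ^ l)) (hyz : Commute y (z ^ l)) (i j k : ℕ) :
    x ^ i * y ^ j * z ^ k = (x ^ l) ^ (i / l) * (y ^ l) ^ (j / l) * (z ^ l) ^ (k / l) *
      (x ^ (i % l) * y ^ (j % l) * z ^ (k % l)) := by
  conv_lhs => rw [← Nat.div_add_mod i l, ← Nat.div_add_mod j l, ← Nat.div_add_mod k l]
  simp only [pow_add, pow_mul, mul_assoc]
  rw [(hxy.pow_pow _ _).left_comm, (hyz.pow_pow _ _).left_comm, (hxz.pow_pow _ _).left_comm]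

theorem pow_mul_pow_mul_pow_mem_span {K A : Type*} [CommSemiring K] [Semiring A] [Algebra K A]
    {R : Subalgebra K A} {G : Set A} {x y z : A} {l : ℕ} (hl : 0 < l)
    (hxy : Commute x (y ^ l)) (hxz : Commute x (z ^ l)) (hyz : Commute y (z ^ l))
    (hx : x ^ l ∈ R) (hy : y ^ l ∈ R) (hz : z ^ l ∈ R)
    (hG : ∀ i j k, i < l → j < l → k < l → x ^ i * y ^ j * z ^ k ∈ G) (i j k : ℕ) :
    x ^ i * y ^ j * z ^ k ∈ Submodule.span R G := by
  rw [pow_mul_pow_mul_pow_eq_div_mul_mod hxy hxz hyz]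
  have hr : (x ^ l) ^ (i / l) * (y ^ l) ^ (j / l) * (z ^ l) ^ (k / l) ∈ R :=
    mul_mem (mul_mem (pow_mem hx _) (pow_mem hy _)) (pow_mem hz _)
  exact Submodule.smul_mem _ (⟨_, hr⟩ : R) (Submodule.subset_span
    (hG _ _ _ (Nat.mod_lt _ hl) (Nat.mod_lt _ hl) (Nat.mod_lt _ hl)))

namespace ASLq

variable (q : ℂ)

theorem aq_mul_bq : aq q * bq q = q • (bq q * aq q) := by
  simpa [aq, bq] using RingQuot.mkAlgHom_rel ℂ (SLqRel.ab (q := q))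

theorem aq_mul_cq : aq q * cq q = q • (cq q * aq q) := by
  simpa [aq, cq] using RingQuot.mkAlgHom_rel ℂ (SLqRel.ac (q := q))

theorem bq_mul_dq : bq q * dq q = q • (dq q * bq q) := by
  simpa [bq, dq] using RingQuot.mkAlgHom_rel ℂ (SLqRel.bd (q := q))

theorem commute_bq_cq : Commute (bq q) (cq q) := by
  show bq q * cq q = cq q * bq q
  simpa [bq, cq] using RingQuot.mkAlgHom_rel ℂ (SLqRel.bc (q := q))

theorem cq_mul_dq : cq q * dq q = q • (dq q * cq q) := by
  simpa [cq, dq] using RingQuot.mkAlgHom_rel ℂ (SLqRel.cd (q := q))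

theorem aq_mul_dq : aq q * dq q = 1 + q • (bq q * cq q) := by
  refine sub_eq_iff_eq_add.mp ?_
  simpa [aq, bq, cq, dq] using RingQuot.mkAlgHom_rel ℂ (SLqRel.det (q := q))

theorem dq_mul_aq : dq q * aq q = 1 + q⁻¹ • (bq q * cq q) := by
  have h : aq q * dq q - dq q * aq q = (q - q⁻¹) • (bq q * cq q) := by
    simpa [aq, bq, cq, dq] using RingQuot.mkAlgHom_rel ℂ (SLqRel.ad (q := q))
  rw [aq_mul_dq, sub_eq_iff_eq_add'] at h
  rw [eq_sub_of_add_eq h.symm]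
  module

theorem adjoin_aq_bq_cq_dq : Algebra.adjoin ℂ {aq q, bq q, cq q, dq q} = ⊤ := by
  have : {aq q, bq q, cq q, dq q} =
      RingQuot.mkAlgHom ℂ (SLqRel q) '' Set.range (FreeAlgebra.ι ℂ) := by
    rw [← Set.range_comp]
    ext x
    simp [Fin.exists_fin_succ, aq, bq, cq, dq, Fa, Fb, Fc, Fd, eq_comm]
  rw [this, Algebra.adjoin_image, FreeAlgebra.adjoin_range_ι, Algebra.map_top,
    AlgHom.range_eq_top]
  exact RingQuot.mkAlgHom_surjective ℂ _

variable (i j k m : ℕ)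

theorem abc_mul_aq : q ^ (j + k) • (aq q ^ i * bq q ^ j * cq q ^ k * aq q) =
    aq q ^ (i + 1) * bq q ^ j * cq q ^ k := by
  simp only [pow_succ, mul_assoc, mul_pow_mul_of_mul_eq_smul (aq_mul_bq q),
    mul_pow_of_mul_eq_smul (aq_mul_cq q), mul_smul_comm, smul_smul, pow_add]

theorem abc_mul_bq : aq q ^ i * bq q ^ j * cq q ^ k * bq q =
    aq q ^ i * bq q ^ (j + 1) * cq q ^ k := by
  rw [mul_assoc, ← ((commute_bq_cq q).pow_right k).eq, pow_succ]
  simp only [mul_assoc]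

theorem abc_mul_cq : aq q ^ i * bq q ^ j * cq q ^ k * cq q =
    aq q ^ i * bq q ^ j * cq q ^ (k + 1) := by
  rw [mul_assoc, ← pow_succ]

theorem bc_mul_bc : bq q * cq q * (bq q ^ j * cq q ^ k) = bq q ^ (j + 1) * cq q ^ (k + 1) := by
  rw [mul_assoc, ← mul_assoc (cq q), ← ((commute_bq_cq q).pow_left j).eq, mul_assoc,
    ← pow_succ', ← mul_assoc, ← pow_succ']

theorem abc_mul_dq : aq q ^ (i + 1) * bq q ^ j * cq q ^ k * dq q =
    q ^ (j + k) • (aq q ^ i * bq q ^ j * cq q ^ k +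
      q • (aq q ^ i * bq q ^ (j + 1) * cq q ^ (k + 1))) := by
  simp only [mul_assoc, pow_mul_of_mul_eq_smul (cq_mul_dq q),
    pow_mul_mul_of_mul_eq_smul (bq_mul_dq q), mul_smul_comm, smul_smul]
  rw [pow_succ, mul_assoc, ← mul_assoc (aq q), aq_mul_dq, add_mul, one_mul, smul_mul_assoc,
    bc_mul_bc, mul_add, mul_smul_comm, mul_comm (q ^ k), ← pow_add]

theorem bc_mul_aq : q ^ (j + k) • (bq q ^ j * cq q ^ k * aq q) = aq q * bq q ^ j * cq q ^ k := by
  simp only [mul_assoc, mul_pow_mul_of_mul_eq_smul (aq_mul_bq q),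
    mul_pow_of_mul_eq_smul (aq_mul_cq q), mul_smul_comm, smul_smul, pow_add]

theorem bcd_mul_aq : q ^ (2 * m) • (bq q ^ j * cq q ^ k * dq q ^ (m + 1) * aq q) =
    q ^ (2 * m) • (bq q ^ j * cq q ^ k * dq q ^ m) +
      q⁻¹ • (bq q ^ (j + 1) * cq q ^ (k + 1) * dq q ^ m) := by
  simp only [pow_succ, mul_assoc, dq_mul_aq, mul_add, mul_one, smul_add, mul_smul_comm,
    ((commute_bq_cq q).pow_right k).left_comm, mul_pow_of_mul_eq_smul (cq_mul_dq q),
    mul_pow_mul_of_mul_eq_smul (bq_mul_dq q), smul_smul]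
  congr 2
  ring

theorem bcd_mul_bq : q ^ m • (bq q ^ j * cq q ^ k * dq q ^ m * bq q) =
    bq q ^ (j + 1) * cq q ^ k * dq q ^ m := by
  simp only [pow_succ, mul_assoc, ((commute_bq_cq q).pow_right k).left_comm,
    mul_pow_of_mul_eq_smul (bq_mul_dq q), mul_smul_comm]

theorem bcd_mul_cq : q ^ m • (bq q ^ j * cq q ^ k * dq q ^ m * cq q) =
    bq q ^ j * cq q ^ (k + 1) * dq q ^ m := by
  simp only [pow_succ, mul_assoc, mul_pow_of_mul_eq_smul (cq_mul_dq q), mul_smul_comm]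

theorem bcd_mul_dq :
    bq q ^ j * cq q ^ k * dq q ^ m * dq q = bq q ^ j * cq q ^ k * dq q ^ (m + 1) := by
  rw [mul_assoc, ← pow_succ]

variable {q : ℂ}

variable (q) in
def monomials : Set (ASLq q) :=
  {x | ∃ i j k : ℕ, x = aq q ^ i * bq q ^ j * cq q ^ k} ∪
    {x | ∃ j k m : ℕ, x = bq q ^ j * cq q ^ k * dq q ^ m}

theorem abc_mem_span (i j k : ℕ) :
    aq q ^ i * bq q ^ j * cq q ^ k ∈ Submodule.span ℂ (monomials q) :=
  Submodule.subset_span (Or.inl ⟨i, j, k, rfl⟩)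

theorem bcd_mem_span (j k m : ℕ) :
    bq q ^ j * cq q ^ k * dq q ^ m ∈ Submodule.span ℂ (monomials q) :=
  Submodule.subset_span (Or.inr ⟨j, k, m, rfl⟩)

section
variable (hq : q ≠ 0)
include hq

theorem mem_span_of_pow_smul_mem {x : ASLq q} {n : ℕ}
    (h : q ^ n • x ∈ Submodule.span ℂ (monomials q)) :
    x ∈ Submodule.span ℂ (monomials q) :=
  (Submodule.smul_mem_iff _ (pow_ne_zero n hq)).mp h

theorem mul_aq_mem_span {g : ASLq q} (hg : g ∈ monomials q) :
    g * aq q ∈ Submodule.span ℂ (monomials q) := by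
  rcases hg with ⟨i, j, k, rfl⟩ | ⟨j, k, _ | m, rfl⟩
  · exact mem_span_of_pow_smul_mem hq (by rw [abc_mul_aq]; exact abc_mem_span _ _ _)
  · refine mem_span_of_pow_smul_mem hq (n := j + k) ?_
    rw [pow_zero, mul_one, bc_mul_aq, ← pow_one (aq q)]
    exact abc_mem_span _ _ _
  · refine mem_span_of_pow_smul_mem hq (n := 2 * m) ?_
    rw [bcd_mul_aq]
    exact add_mem (Submodule.smul_mem _ _ (bcd_mem_span _ _ _))
      (Submodule.smul_mem _ _ (bcd_mem_span _ _ _))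

theorem mul_bq_mem_span {g : ASLq q} (hg : g ∈ monomials q) :
    g * bq q ∈ Submodule.span ℂ (monomials q) := by
  rcases hg with ⟨i, j, k, rfl⟩ | ⟨j, k, m, rfl⟩
  · rw [abc_mul_bq]; exact abc_mem_span _ _ _
  · exact mem_span_of_pow_smul_mem hq (by rw [bcd_mul_bq]; exact bcd_mem_span _ _ _)

theorem mul_cq_mem_span {g : ASLq q} (hg : g ∈ monomials q) :
    g * cq q ∈ Submodule.span ℂ (monomials q) := by
  rcases hg with ⟨i, j, k, rfl⟩ | ⟨j, k, m, rfl⟩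
  · rw [abc_mul_cq]; exact abc_mem_span _ _ _
  · exact mem_span_of_pow_smul_mem hq (by rw [bcd_mul_cq]; exact bcd_mem_span _ _ _)

omit hq in
theorem mul_dq_mem_span {g : ASLq q} (hg : g ∈ monomials q) :
    g * dq q ∈ Submodule.span ℂ (monomials q) := by
  rcases hg with ⟨_ | i, j, k, rfl⟩ | ⟨j, k, m, rfl⟩
  · rw [pow_zero, one_mul, ← pow_one (dq q)]; exact bcd_mem_span _ _ _
  · rw [abc_mul_dq]
    exact Submodule.smul_mem _ _ (add_mem (abc_mem_span _ _ _)
      (Submodule.smul_mem _ _ (abc_mem_span _ _ _)))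
  · rw [bcd_mul_dq]; exact bcd_mem_span _ _ _

theorem span_monomials : Submodule.span ℂ (monomials q) = ⊤ := by
  refine Submodule.span_eq_top_of_mul_mem (adjoin_aq_bq_cq_dq q) ?_ ?_
  · simpa using abc_mem_span (q := q) 0 0 0
  · rintro s (rfl | rfl | rfl | rfl) g hg
    exacts [mul_aq_mem_span hq hg, mul_bq_mem_span hq hg, mul_cq_mem_span hq hg,
      mul_dq_mem_span hg]

end

end ASLq

/-- For `q` a primitive `l`-th root of unity, `l` odd, `A(SL_q(2))` is generated
as a left module over the central subalgebra `A(SL(2))` (generated by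
`a^l, b^l, c^l, d^l`) by the `2l^3` monomials `a^{ra} b^{rb} c^{rc}` and
`b^{rb} c^{rc} d^{rd}` with exponents between `0` and `l-1`. -/
theorem stmt10 (q : ℂ) (l : ℕ) (hq : IsPrimitiveRoot q l) (hl : Odd l) :
    Submodule.span
      (Algebra.adjoin ℂ ({aq q ^ l, bq q ^ l, cq q ^ l, dq q ^ l} : Set (ASLq q)))
      ({x : ASLq q | ∃ ra rb rc : ℕ, ra ≤ l - 1 ∧ rb ≤ l - 1 ∧ rc ≤ l - 1 ∧
          x = aq q ^ ra * bq q ^ rb * cq q ^ rc} ∪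
       {x : ASLq q | ∃ rb rc rd : ℕ, rb ≤ l - 1 ∧ rc ≤ l - 1 ∧ rd ≤ l - 1 ∧
          x = bq q ^ rb * cq q ^ rc * dq q ^ rd}) = ⊤ := by
  have hl0 : 0 < l := hl.pos
  have hql : q ^ l = 1 := hq.pow_eq_one
  have mem : ∀ {x}, x ∈ ({aq q ^ l, bq q ^ l, cq q ^ l, dq q ^ l} : Set (ASLq q)) →
      x ∈ Algebra.adjoin ℂ ({aq q ^ l, bq q ^ l, cq q ^ l, dq q ^ l} : Set (ASLq q)) :=
    fun hx => Algebra.subset_adjoin hx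
  rw [← Submodule.restrictScalars_eq_top_iff ℂ, eq_top_iff,
    ← ASLq.span_monomials (hq.ne_zero hl0.ne'), Submodule.span_le]
  rintro _ (⟨i, j, k, rfl⟩ | ⟨j, k, m, rfl⟩)
  · exact pow_mul_pow_mul_pow_mem_span hl0 (commute_pow_of_mul_eq_smul (ASLq.aq_mul_bq q) hql)
      (commute_pow_of_mul_eq_smul (ASLq.aq_mul_cq q) hql) ((ASLq.commute_bq_cq q).pow_right l)
      (mem (by simp)) (mem (by simp)) (mem (by simp))
      (fun i j k hi hj hk => Or.inl ⟨i, j, k, Nat.le_sub_one_of_lt hi, Nat.le_sub_one_of_lt hj,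
        Nat.le_sub_one_of_lt hk, rfl⟩) i j k
  · exact pow_mul_pow_mul_pow_mem_span hl0 ((ASLq.commute_bq_cq q).pow_right l)
      (commute_pow_of_mul_eq_smul (ASLq.bq_mul_dq q) hql)
      (commute_pow_of_mul_eq_smul (ASLq.cq_mul_dq q) hql)
      (mem (by simp)) (mem (by simp)) (mem (by simp))
      (fun j k m hj hk hm => Or.inr ⟨j, k, m, Nat.le_sub_one_of_lt hj, Nat.le_sub_one_of_lt hk,
        Nat.le_sub_one_of_lt hm, rfl⟩) j k m
end
end
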